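/- Reduction of n-SSP to (n−1)-SSP by surrogate combination of two rows: combining the first two constraints with weights 1 and n*D (where all coefficients of both rows are < D and both right-hand sides are < n*D) yields a system with m−1 constraints whose 0/1 solution set equals that of the original m-constraint system. -/
import Mathlib


set_option maxHeartbeats 1000000 in
theorem surrogate_two_row_reduction (m n D : ℕ) (hm : 2 ≤ m) (hD : 1 ≤ D)
    (a : Fin m → Fin n → ℕ) (d : Fin m → ℕ)
    (ha0 : ∀ j, a ⟨0, by omega⟩ j < D) (ha1 : ∀ j, a ⟨1, by omega⟩ j < D)
    (hd0 : d ⟨0, by omega⟩ < n * D) (hd1 : d ⟨1, by omega⟩ < n * D)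
    (x : Fin n → ℕ) (hx : ∀ j, x j = 0 ∨ x j = 1) :
    (∀ i, ∑ j, a i j * x j = d i) ↔
      ((∑ j, (a ⟨0, by omega⟩ j + n * D * a ⟨1, by omega⟩ j) * x j =
          d ⟨0, by omega⟩ + n * D * d ⟨1, by omega⟩) ∧
        ∀ i : Fin m, 2 ≤ (i : ℕ) → ∑ j, a i j * x j = d i) := by
  have hsplit : ∀ k : Fin n → ℕ, ∑ j, (a ⟨0, by omega⟩ j + n * D * a ⟨1, by omega⟩ j) * k j
      = (∑ j, a ⟨0, by omega⟩ j * k j) + n * D * ∑ j, a ⟨1, by omega⟩ j * k j := by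
    intro k
    rw [Finset.mul_sum, ← Finset.sum_add_distrib]
    congr 1; ext j; ring
  have hs0 : ∑ j, a ⟨0, by omega⟩ j * x j < n * D := by
    calc ∑ j, a ⟨0, by omega⟩ j * x j ≤ ∑ j : Fin n, (D - 1) := by
          apply Finset.sum_le_sum
          intro j _
          rcases hx j with h | h <;> simp [h] <;> have := ha0 j <;> omega
      _ = n * (D - 1) := by simp [Finset.sum_const, mul_comm]
      _ < n * D := by
          have hn : 1 ≤ n := by
            rcases Nat.eq_zero_or_pos n with h | h
            · subst h; simp at hd0
            · exact h
          obtain ⟨E, rfl⟩ : ∃ E, D = E + 1 := ⟨D - 1, by omega⟩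
          simp only [Nat.add_sub_cancel, Nat.mul_add, Nat.mul_one]
          omega
  constructor
  · intro h
    refine ⟨?_, fun i _ => h i⟩
    rw [hsplit x, h ⟨0, by omega⟩, h ⟨1, by omega⟩]
  · rintro ⟨hcomb, hrest⟩
    rw [hsplit] at hcomb
    have e0 : ∑ j, a ⟨0, by omega⟩ j * x j = d ⟨0, by omega⟩ := by
      have h1 := congrArg (· % (n*D)) hcomb
      simp only [Nat.add_mul_mod_self_left] at h1
      rwa [Nat.mod_eq_of_lt hs0, Nat.mod_eq_of_lt hd0] at h1
    have e1 : ∑ j, a ⟨1, by omega⟩ j * x j = d ⟨1, by omega⟩ := by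
      have hnd : 0 < n * D := by omega
      rw [e0] at hcomb
      have h2 : (n*D) * (∑ j, a ⟨1, by omega⟩ j * x j) = (n*D) * d ⟨1, by omega⟩ := by omega
      exact Nat.eq_of_mul_eq_mul_left hnd h2
    intro i
    by_cases h0 : (i : ℕ) = 0
    · have : i = ⟨0, by omega⟩ := Fin.ext h0
      rw [this]; exact e0
    by_cases h1 : (i : ℕ) = 1
    · have : i = ⟨1, by omega⟩ := Fin.ext h1
      rw [this]; exact e1
    · exact hrest i (by omega)
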